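/- arXiv:math/0312393 — 4 statements merged into one kernel-verified Lean document; each statement's English description precedes it below -/
import Mathlib

section
/- Let K be a number field, let T ⊆ M_K be any set of places of K, and let x, y ∈ ℙⁿ(K) be two distinct points. Then h(x) + h(y) ≥ ∑_{v ∈ T} n_v · δ_v(x, y) − log 2. -/
/-!
Choose `i, j` with `W = x_i y_j - x_j y_i ≠ 0`. At every place `|W|_v ≤ c_v |x|_v |y|_v`, where
`c_v = 2` at the archimedean places and `c_v = 1` at the finite ones, so the local terms
`n_v log (c_v |x|_v |y|_v / |W|_v)` are nonnegative and each dominates `n_v δ_v(x, y)`. Summed over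
all places they give exactly `h(x) + h(y) + log 2`, by the product formula for `W` and
`∑_{v | ∞} n_v = 1`; this bounds the sum of `n_v δ_v(x, y)` over any set of places.
-/

open NumberField IsDedekindDomain
open scoped Classical

/-- The set of places of a number field `K`: infinite (archimedean) places together with
finite places (nonzero prime ideals of the ring of integers). -/
abbrev NumberField.Place (K : Type*) [Field K] [NumberField K] : Type _ :=
  InfinitePlace K ⊕ HeightOneSpectrum (𝓞 K)

variable (K : Type*) [Field K] [NumberField K]

/-- The residue characteristic of a finite place. -/
noncomputable def NumberField.resChar (v : HeightOneSpectrum (𝓞 K)) : ℕ :=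
  ringChar (𝓞 K ⧸ v.asIdeal)

/-- The ramification index of a finite place over its residue characteristic. -/
noncomputable def NumberField.eIdx (v : HeightOneSpectrum (𝓞 K)) : ℕ :=
  Ideal.ramificationIdx'
    (Ideal.span {(NumberField.resChar K v : ℤ)}) v.asIdeal

/-- The residue degree of a finite place over its residue characteristic,
computed as the exponent of `p` in the absolute norm of the prime. -/
noncomputable def NumberField.fIdx (v : HeightOneSpectrum (𝓞 K)) : ℕ :=
  (Ideal.absNorm v.asIdeal).factorization (NumberField.resChar K v)

/-- The order of vanishing of `x ∈ K` at a finite place. -/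
noncomputable def NumberField.ordAt (v : HeightOneSpectrum (𝓞 K)) (x : K) : ℤ :=
  if hx : x = 0 then 0
  else -Multiplicative.toAdd (WithZero.unzero (((v.valuation K).ne_zero_iff).mpr hx))

/-- The absolute value attached to a finite place `v` with residue characteristic `p`,
normalized so that it extends the standard (`p`-adic) absolute value on `ℚ`:
`|x|_v = p ^ (-(ord_v x) / e(v/p))`. -/
noncomputable def NumberField.finAbs (v : HeightOneSpectrum (𝓞 K)) (x : K) : ℝ :=
  if x = 0 then 0
  else (NumberField.resChar K v : ℝ) ^
    (-(NumberField.ordAt K v x : ℝ) / (NumberField.eIdx K v : ℝ))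

/-- The normalized absolute value `|·|_v` attached to a place `v` of `K`; it extends the
standard absolute value on the completion `ℚ_v` of `ℚ`. -/
noncomputable def NumberField.placeAbs : NumberField.Place K → K → ℝ
  | Sum.inl w => fun x => w x
  | Sum.inr v => fun x => NumberField.finAbs K v x

/-- The local degree `[K_v : ℚ_v]` of a place `v` of `K`. -/
noncomputable def NumberField.localDeg : NumberField.Place K → ℕ
  | Sum.inl w => w.mult
  | Sum.inr v => NumberField.eIdx K v * NumberField.fIdx K v

/-- The normalized local degree `n_v = [K_v : ℚ_v] / [K : ℚ]`. -/
noncomputable def NumberField.nv (v : NumberField.Place K) : ℝ :=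
  (NumberField.localDeg K v : ℝ) / (Module.finrank ℚ K : ℝ)

/-- `max_k |x_k|_v` for a tuple of projective coordinates. -/
noncomputable def NumberField.supAbs (v : NumberField.Place K) {n : ℕ}
    (x : Fin (n + 1) → K) : ℝ :=
  Finset.univ.sup' Finset.univ_nonempty fun i => NumberField.placeAbs K v (x i)

/-- The absolute logarithmic Weil height of a point of `ℙⁿ(K)` given by projective
coordinates `x = [x_0 : ⋯ : x_n]`:  `h(x) = ∑_v n_v log max_k |x_k|_v`. -/
noncomputable def NumberField.heightProj {n : ℕ} (x : Fin (n + 1) → K) : ℝ :=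
  ∑ᶠ v : NumberField.Place K, NumberField.nv K v * Real.log (NumberField.supAbs K v x)

/-- The logarithmic `v`-adic distance between two points of `ℙⁿ(K)`:
`δ_v(x,y) = -log ( max_{i,j} |x_i y_j - x_j y_i|_v / (max_k |x_k|_v ⬝ max_k |y_k|_v) )`. -/
noncomputable def NumberField.deltaAt (v : NumberField.Place K) {n : ℕ}
    (x y : Fin (n + 1) → K) : ℝ :=
  -Real.log
    ((Finset.univ.sup' Finset.univ_nonempty fun p : Fin (n + 1) × Fin (n + 1) =>
        NumberField.placeAbs K v (x p.1 * y p.2 - x p.2 * y p.1)) /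
      (NumberField.supAbs K v x * NumberField.supAbs K v y))


open Function

theorem finsum_sum_type {α β M : Type*} [AddCommMonoid M] {f : α ⊕ β → M}
    (hf : HasFiniteSupport f) : ∑ᶠ x, f x = ∑ᶠ a, f (.inl a) + ∑ᶠ b, f (.inr b) := by
  rw [← finsum_mem_univ, ← Set.range_inl_union_range_inr,
    finsum_mem_union' Set.isCompl_range_inl_range_inr.disjoint (hf.subset Set.inter_subset_right)
      (hf.subset Set.inter_subset_right),
    finsum_mem_range Sum.inl_injective, finsum_mem_range Sum.inr_injective]

theorem finsum_mem_le_finsum_of_nonneg {α M : Type*} [AddCommMonoid M] [PartialOrder M]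
    [IsOrderedAddMonoid M] {s : Set α} {f g : α → M} (hg : HasFiniteSupport g) (hg0 : 0 ≤ g)
    (hfg : ∀ a ∈ s, f a ≤ g a) : ∑ᶠ a ∈ s, f a ≤ ∑ᶠ a, g a := by
  rw [finsum_mem_def]
  by_cases hf : HasFiniteSupport (s.indicator f)
  · refine finsum_le_finsum' hf hg fun a => ?_
    by_cases ha : a ∈ s
    · simpa [Set.indicator_of_mem ha] using hfg a ha
    · simpa [Set.indicator_of_notMem ha] using hg0 a
  · rw [finsum_of_infinite_support hf]
    exact finsum_nonneg hg0

namespace NumberField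

variable {K : Type*} [Field K] [NumberField K]

section FinitePlace

variable (v : HeightOneSpectrum (𝓞 K))

instance : Finite (𝓞 K ⧸ v.asIdeal) := Ideal.finiteQuotientOfFreeOfNeBot v.asIdeal v.ne_bot

instance : CharP (𝓞 K ⧸ v.asIdeal) (resChar K v) := ringChar.charP _

lemma resChar_prime : (resChar K v).Prime := by
  let := Ideal.Quotient.field v.asIdeal
  exact CharP.char_is_prime (𝓞 K ⧸ v.asIdeal) (resChar K v)

lemma resChar_pow_fIdx : resChar K v ^ fIdx K v = Ideal.absNorm v.asIdeal := by
  let := Fintype.ofFinite (𝓞 K ⧸ v.asIdeal)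
  let := Ideal.Quotient.field v.asIdeal
  obtain ⟨m, hp, hcard⟩ := FiniteField.card (𝓞 K ⧸ v.asIdeal) (resChar K v)
  have habs : Ideal.absNorm v.asIdeal = resChar K v ^ (m : ℕ) := by
    rw [Ideal.absNorm_apply, Submodule.cardQuot_apply, Nat.card_eq_fintype_card, hcard]
  rw [habs, fIdx, habs, hp.factorization_pow, Finsupp.single_eq_same]

lemma eIdx_ne_zero : eIdx K v ≠ 0 := by
  have hmem : (resChar K v : 𝓞 K) ∈ v.asIdeal := by
    rw [← Ideal.Quotient.eq_zero_iff_mem, map_natCast, CharP.cast_eq_zero]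
  apply Ideal.IsDedekindDomain.ramificationIdx'_ne_zero _ v.isPrime
  · simpa [Ideal.map_span] using hmem
  · simpa [Ideal.map_span] using (resChar_prime v).ne_zero

lemma fIdx_ne_zero : fIdx K v ≠ 0 := by
  intro h
  have := HeightOneSpectrum.one_lt_absNorm v
  rw [← resChar_pow_fIdx, h, pow_zero] at this
  exact this.false

lemma localDeg_inr_ne_zero : localDeg K (.inr v) ≠ 0 :=
  mul_ne_zero (eIdx_ne_zero v) (fIdx_ne_zero v)

lemma finAbs_nonneg (x : K) : 0 ≤ finAbs K v x := by
  unfold finAbs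
  split_ifs
  exacts [le_rfl, Real.rpow_nonneg (Nat.cast_nonneg _) _]

-- Mathlib's `FinitePlace.mk v` is `N(v) ^ (-ord_v)`; through this identity it supplies the
-- ultrametric inequality, the product formula and the finiteness of supports for `finAbs`.
theorem finAbs_pow_localDeg (x : K) : finAbs K v x ^ localDeg K (.inr v) = FinitePlace.mk v x := by
  rw [FinitePlace.mk_apply, FinitePlace.norm_embedding']
  by_cases hx : x = 0
  · simp [finAbs, hx, localDeg_inr_ne_zero v]
  have hval : v.valuation K x ≠ 0 := (v.valuation K).ne_zero_iff.mpr hx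
  rw [WithZeroMulInt.toNNReal_neg_apply _ hval, finAbs, if_neg hx, ordAt, dif_neg hx,
    localDeg, ← Real.rpow_natCast, ← Real.rpow_mul (Nat.cast_nonneg _)]
  push_cast
  rw [← resChar_pow_fIdx, Nat.cast_pow, ← Real.rpow_natCast, ← Real.rpow_intCast,
    ← Real.rpow_mul (Nat.cast_nonneg _)]
  congr 1
  field_simp [eIdx_ne_zero v]

lemma finAbs_pos {x : K} (hx : x ≠ 0) : 0 < finAbs K v x := by
  rw [finAbs, if_neg hx]
  exact Real.rpow_pos_of_pos (Nat.cast_pos.mpr (resChar_prime v).pos) _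

lemma finAbs_mul (a b : K) : finAbs K v (a * b) = finAbs K v a * finAbs K v b := by
  refine (pow_left_inj₀ (finAbs_nonneg v _)
    (mul_nonneg (finAbs_nonneg v a) (finAbs_nonneg v b)) (localDeg_inr_ne_zero v)).mp ?_
  rw [mul_pow, finAbs_pow_localDeg, finAbs_pow_localDeg, finAbs_pow_localDeg, map_mul]

lemma finAbs_sub_le_max (a b : K) : finAbs K v (a - b) ≤ max (finAbs K v a) (finAbs K v b) := by
  have hN := localDeg_inr_ne_zero v
  refine (pow_le_pow_iff_left₀ (finAbs_nonneg v _)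
    (le_max_of_le_left (finAbs_nonneg v a)) hN).mp ?_
  have hsub : FinitePlace.mk v (a - b) ≤ max (FinitePlace.mk v a) (FinitePlace.mk v b) := by
    simpa [sub_eq_add_neg] using FinitePlace.add_le (FinitePlace.mk v) a (-b)
  rw [← finAbs_pow_localDeg, ← finAbs_pow_localDeg, ← finAbs_pow_localDeg] at hsub
  refine hsub.trans (max_le ?_ ?_) <;>
    exact pow_le_pow_left₀ (finAbs_nonneg v _) (by simp) _

lemma hasFiniteMulSupport_finitePlace_mk {z : K} (hz : z ≠ 0) :
    HasFiniteMulSupport fun u : HeightOneSpectrum (𝓞 K) => FinitePlace.mk u z :=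
  (FinitePlace.hasFiniteMulSupport hz).comp_of_injective fun _ _ h => FinitePlace.mk_eq_iff.mp h

lemma hasFiniteMulSupport_finAbs {z : K} (hz : z ≠ 0) :
    HasFiniteMulSupport fun u : HeightOneSpectrum (𝓞 K) => finAbs K u z := by
  refine (hasFiniteMulSupport_finitePlace_mk hz).subset fun u hu => ?_
  rw [mem_mulSupport, ← finAbs_pow_localDeg]
  exact fun h => hu ((pow_eq_one_iff_of_nonneg (finAbs_nonneg u z) (localDeg_inr_ne_zero u)).mp h)

end FinitePlace

section Place

lemma nv_nonneg (v : Place K) : 0 ≤ nv K v := by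
  unfold nv
  positivity

lemma sum_nv_inl : ∑ w : InfinitePlace K, nv K (.inl w) = 1 := by
  simp only [nv, localDeg, ← Finset.sum_div, ← Nat.cast_sum, InfinitePlace.sum_mult_eq]
  exact div_self (Nat.cast_ne_zero.mpr Module.finrank_pos.ne')

lemma placeAbs_nonneg (v : Place K) (z : K) : 0 ≤ placeAbs K v z := by
  cases v with
  | inl w => exact apply_nonneg w z
  | inr u => exact finAbs_nonneg u z

lemma placeAbs_pos (v : Place K) {z : K} (hz : z ≠ 0) : 0 < placeAbs K v z := by
  cases v with
  | inl w => exact InfinitePlace.pos_iff.mpr hz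
  | inr u => exact finAbs_pos u hz

lemma placeAbs_mul (v : Place K) (a b : K) :
    placeAbs K v (a * b) = placeAbs K v a * placeAbs K v b := by
  cases v with
  | inl w => exact map_mul w a b
  | inr u => exact finAbs_mul u a b

def triangleConst : Place K → ℝ
  | .inl _ => 2
  | .inr _ => 1

lemma one_le_triangleConst (v : Place K) : 1 ≤ triangleConst v := by
  cases v <;> norm_num [triangleConst]

lemma placeAbs_sub_le (v : Place K) (a b : K) :
    placeAbs K v (a - b) ≤ triangleConst v * max (placeAbs K v a) (placeAbs K v b) := by
  cases v with
  | inl w =>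
    calc w (a - b) ≤ w a + w b := w.1.sub_le_add a b
      _ ≤ 2 * max (w a) (w b) := by linarith [le_max_left (w a) (w b), le_max_right (w a) (w b)]
  | inr u => exact (one_mul (max (finAbs K u a) _)).symm ▸ finAbs_sub_le_max u a b

variable {n : ℕ}

lemma le_supAbs (v : Place K) (x : Fin (n + 1) → K) (k : Fin (n + 1)) :
    placeAbs K v (x k) ≤ supAbs K v x :=
  Finset.le_sup' (fun i => placeAbs K v (x i)) (Finset.mem_univ k)

lemma supAbs_pos (v : Place K) {x : Fin (n + 1) → K} (hx : x ≠ 0) : 0 < supAbs K v x := by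
  obtain ⟨k, hk⟩ := ne_iff.mp hx
  exact (placeAbs_pos v hk).trans_le (le_supAbs v x k)

lemma placeAbs_wedge_le (v : Place K) (x y : Fin (n + 1) → K) (i j : Fin (n + 1)) :
    placeAbs K v (x i * y j - x j * y i) ≤ triangleConst v * (supAbs K v x * supAbs K v y) := by
  have hle : ∀ k l, placeAbs K v (x k * y l) ≤ supAbs K v x * supAbs K v y := fun k l => by
    rw [placeAbs_mul]
    exact mul_le_mul (le_supAbs v x k) (le_supAbs v y l) (placeAbs_nonneg v _)
      ((placeAbs_nonneg v _).trans (le_supAbs v x k))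
  exact (placeAbs_sub_le v _ _).trans <|
    mul_le_mul_of_nonneg_left (max_le (hle i j) (hle j i)) (by linarith [one_le_triangleConst v])

end Place

section FiniteSupport

lemma hasFiniteSupport_log_of_comp_inr {F : Place K → ℝ}
    (hF : HasFiniteMulSupport (F ∘ Sum.inr)) :
    HasFiniteSupport fun v => Real.log (F v) := by
  refine ((Set.finite_range Sum.inl).union (hF.image Sum.inr)).subset ?_
  rintro (w | u) hv
  · exact Or.inl ⟨w, rfl⟩
  · exact Or.inr ⟨u, fun h => hv ((congrArg Real.log h).trans Real.log_one), rfl⟩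

lemma hasFiniteSupport_log_placeAbs {z : K} (hz : z ≠ 0) :
    HasFiniteSupport fun v => Real.log (placeAbs K v z) :=
  hasFiniteSupport_log_of_comp_inr (hasFiniteMulSupport_finAbs hz)

lemma hasFiniteSupport_log_triangleConst :
    HasFiniteSupport fun v : Place K => Real.log (triangleConst v) :=
  hasFiniteSupport_log_of_comp_inr hasFiniteMulSupport_one

lemma hasFiniteSupport_log_supAbs {n : ℕ} {x : Fin (n + 1) → K} (hx : x ≠ 0) :
    HasFiniteSupport fun v => Real.log (supAbs K v x) := by
  refine hasFiniteSupport_log_of_comp_inr (((Set.toFinite {k | x k ≠ 0}).biUnion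
    fun k hk => hasFiniteMulSupport_finAbs hk).subset fun u hu => ?_)
  by_contra! hone
  simp only [Set.mem_iUnion, mem_mulSupport, exists_prop, not_exists, not_and, not_not] at hone
  obtain ⟨k, hk⟩ := ne_iff.mp hx
  refine hu (le_antisymm ?_ ((hone k hk).symm.le.trans (le_supAbs (.inr u) x k)))
  refine Finset.sup'_le Finset.univ_nonempty _ fun l _ => ?_
  by_cases hl : x l = 0
  · simp [placeAbs, finAbs, hl]
  · exact (hone l hl).le

end FiniteSupport

theorem finsum_nv_mul_log_placeAbs {z : K} (hz : z ≠ 0) :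
    ∑ᶠ v : Place K, nv K v * Real.log (placeAbs K v z) = 0 := by
  have hlocal : ∀ v, nv K v * Real.log (placeAbs K v z) =
      (Module.finrank ℚ K : ℝ)⁻¹ * Real.log (placeAbs K v z ^ localDeg K v) := by
    intro v
    rw [Real.log_pow, nv]
    ring
  have hfin : HasFiniteSupport fun v => Real.log (placeAbs K v z ^ localDeg K v) :=
    hasFiniteSupport_log_of_comp_inr <| by
      simpa only [comp_def, placeAbs, finAbs_pow_localDeg]
        using hasFiniteMulSupport_finitePlace_mk hz
  have hfinite : ∑ᶠ u : HeightOneSpectrum (𝓞 K), Real.log (FinitePlace.mk u z) =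
      ∑ᶠ w : FinitePlace K, Real.log (w z) :=
    finsum_comp_equiv (f := fun w : FinitePlace K => Real.log (w z))
      FinitePlace.equivHeightOneSpectrum.symm
  have hpos : ∀ w : InfinitePlace K, w z ^ w.mult ≠ 0 := fun w =>
    pow_ne_zero _ (InfinitePlace.pos_iff.mpr hz).ne'
  rw [finsum_congr hlocal, ← mul_finsum, finsum_sum_type hfin]
  simp only [placeAbs, finAbs_pow_localDeg]
  simp only [localDeg]
  rw [hfinite, finsum_eq_sum_of_fintype, ← Real.log_prod fun w _ => hpos w,
    ← Real.log_finprod fun w => FinitePlace.pos_iff.mpr hz,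
    ← Real.log_mul (Finset.prod_ne_zero_iff.mpr fun w _ => hpos w)
      (finprod_ne_zero fun w => (FinitePlace.pos_iff.mpr hz).ne'),
    prod_abs_eq_one hz, Real.log_one, mul_zero]

theorem finsum_nv_mul_log_triangleConst :
    ∑ᶠ v : Place K, nv K v * Real.log (triangleConst v) = Real.log 2 := by
  rw [finsum_sum_type (hasFiniteSupport_log_triangleConst.fun_mul_right _)]
  simp only [triangleConst, Real.log_one, mul_zero, finsum_zero, add_zero]
  rw [finsum_eq_sum_of_fintype, ← Finset.sum_mul, sum_nv_inl, one_mul]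

section Distance

variable {n : ℕ} {x y : Fin (n + 1) → K}

lemma deltaAt_le (v : Place K) (hx : x ≠ 0) (hy : y ≠ 0) {i j : Fin (n + 1)}
    (hW : x i * y j - x j * y i ≠ 0) :
    deltaAt K v x y ≤ Real.log (supAbs K v x) + Real.log (supAbs K v y) -
      Real.log (placeAbs K v (x i * y j - x j * y i)) := by
  have hX := supAbs_pos v hx
  have hY := supAbs_pos v hy
  have hW' := placeAbs_pos v hW
  have hD := Finset.le_sup' (fun p : Fin (n + 1) × Fin (n + 1) =>
    placeAbs K v (x p.1 * y p.2 - x p.2 * y p.1)) (Finset.mem_univ (i, j))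
  rw [deltaAt, Real.log_div (hW'.trans_le hD).ne' (mul_pos hX hY).ne', Real.log_mul hX.ne' hY.ne']
  linarith [Real.log_le_log hW' hD]

lemma log_placeAbs_wedge_le (v : Place K) (hx : x ≠ 0) (hy : y ≠ 0) {i j : Fin (n + 1)}
    (hW : x i * y j - x j * y i ≠ 0) :
    Real.log (placeAbs K v (x i * y j - x j * y i)) ≤
      Real.log (supAbs K v x) + Real.log (supAbs K v y) + Real.log (triangleConst v) := by
  have hc : 0 < triangleConst v := zero_lt_one.trans_le (one_le_triangleConst v)
  have hX := supAbs_pos v hx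
  have hY := supAbs_pos v hy
  have := Real.log_le_log (placeAbs_pos v hW) (placeAbs_wedge_le v x y i j)
  rw [Real.log_mul hc.ne' (mul_pos hX hY).ne', Real.log_mul hX.ne' hY.ne'] at this
  linarith

theorem heightProj_add_heightProj_add_log_two_eq (hx : x ≠ 0) (hy : y ≠ 0) {z : K}
    (hz : z ≠ 0) :
    heightProj K x + heightProj K y + Real.log 2 =
      ∑ᶠ v, nv K v * (Real.log (supAbs K v x) + Real.log (supAbs K v y) +
        Real.log (triangleConst v) - Real.log (placeAbs K v z)) := by
  have hX := (hasFiniteSupport_log_supAbs hx).fun_mul_right (nv K)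
  have hY := (hasFiniteSupport_log_supAbs hy).fun_mul_right (nv K)
  have hc := hasFiniteSupport_log_triangleConst.fun_mul_right (nv K)
  have hZ := (hasFiniteSupport_log_placeAbs hz).fun_mul_right (nv K)
  simp only [mul_add, mul_sub]
  rw [finsum_sub_distrib ((hX.fun_add hY).fun_add hc) hZ, finsum_add_distrib (hX.fun_add hY) hc,
    finsum_add_distrib hX hY, finsum_nv_mul_log_placeAbs hz, finsum_nv_mul_log_triangleConst,
    heightProj, heightProj, sub_zero]

end Distance

end NumberField

/-- Lemma 3.1 of Baker–Silverman: Let `K` be a number field, let `T` be any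
set of places of `K`, and let `x ≠ y` be distinct points of `ℙⁿ(K)`.  Then
`h(x) + h(y) ≥ ∑_{v ∈ T} n_v δ_v(x,y) - log 2`. -/
theorem height_add_height_ge_sum_delta_sub_log_two
    {K : Type*} [Field K] [NumberField K] {n : ℕ}
    (T : Set (NumberField.Place K)) (x y : Fin (n + 1) → K)
    (hx : x ≠ 0) (hy : y ≠ 0)
    (hxy : ∃ i j, x i * y j ≠ x j * y i) :
    NumberField.heightProj K x + NumberField.heightProj K y ≥
      (∑ᶠ v ∈ T, NumberField.nv K v * NumberField.deltaAt K v x y) - Real.log 2 := by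
  obtain ⟨i, j, hij⟩ := hxy
  have hW : x i * y j - x j * y i ≠ 0 := sub_ne_zero.mpr hij
  rw [ge_iff_le, sub_le_iff_le_add, heightProj_add_heightProj_add_log_two_eq hx hy hW]
  refine finsum_mem_le_finsum_of_nonneg ?_ (fun v => ?_) (fun v _ => ?_)
  · have := hasFiniteSupport_log_supAbs hx
    have := hasFiniteSupport_log_supAbs hy
    have := hasFiniteSupport_log_placeAbs hW
    have := hasFiniteSupport_log_triangleConst (K := K)
    fun_prop
  · exact mul_nonneg (nv_nonneg v) (sub_nonneg.mpr (log_placeAbs_wedge_le v hx hy hW))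
  · refine mul_le_mul_of_nonneg_left ?_ (nv_nonneg v)
    linarith [deltaAt_le v hx hy hW, Real.log_nonneg (one_le_triangleConst v)]
end

section
/- Let M be an abelian group, let m ≥ 1 be an integer, and let σ : M → M be an additive group endomorphism with σ^m = id. Let Φ(X) ∈ ℤ[X] be a monic polynomial of degree 2g all of whose complex roots have absolute value q^{1/2} for some real number q > 1. If P ∈ M satisfies Φ(σ)(P) = 0, then P is a torsion element of M (i.e., N·P = 0 for some integer N ≥ 1). -/
/-!
The complex roots of `X ^ m - 1` lie on the unit circle and those of `Φ` do not, so the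
resultant `r` of `Φ` and `X ^ m - 1` is a nonzero integer. It is of the form
`u * Φ + v * (X ^ m - 1)`, and both summands evaluated at `σ` kill `P`, hence `r • P = 0`.
-/

open Polynomial

namespace Polynomial

theorem resultant_ne_zero_of_forall_aeval_ne_zero {R K : Type*} [CommRing R] [Field K]
    [IsAlgClosed K] [Algebra R K] (hinj : Function.Injective (algebraMap R K)) {f g : R[X]}
    (h : ∀ z : K, aeval z f ≠ 0 ∨ aeval z g ≠ 0) : resultant f g ≠ 0 := by
  have hcop : IsCoprime (f.map (algebraMap R K)) (g.map (algebraMap R K)) := by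
    rw [isCoprime_iff_aeval_ne_zero_of_isAlgClosed (k := K) K]
    simpa only [aeval_map_algebraMap] using h
  have hres := resultant_ne_zero _ _ hcop
  rw [natDegree_map_eq_of_injective hinj, natDegree_map_eq_of_injective hinj,
    resultant_map_map] at hres
  exact fun h0 => hres (by rw [h0, map_zero])

theorem resultant_smul_eq_zero_of_aeval_smul_eq_zero {R A M : Type*} [CommRing R] [Ring A]
    [Algebra R A] [AddCommGroup M] [Module R M] [Module A M] [IsScalarTower R A M]
    {f g : R[X]} (hdeg : f.natDegree ≠ 0 ∨ g.natDegree ≠ 0) (a : A) {x : M}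
    (hf : aeval a f • x = 0) (hg : aeval a g • x = 0) : resultant f g • x = 0 := by
  obtain ⟨p, q, -, -, hpq⟩ := exists_mul_add_mul_eq_C_resultant f g le_rfl le_rfl hdeg
  calc resultant f g • x = aeval a (C (resultant f g)) • x := by rw [aeval_C, algebraMap_smul]
    _ = aeval a p • aeval a f • x + aeval a q • aeval a g • x := by
      rw [← hpq, mul_comm f, mul_comm g, map_add, map_mul, map_mul, add_smul, mul_smul, mul_smul]
    _ = 0 := by rw [hf, hg, smul_zero, smul_zero, add_zero]

theorem aeval_X_pow_sub_one_ne_zero_of_norm_ne_one {R : Type*} [CommRing R] [Algebra R ℂ]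
    {m : ℕ} (hm : m ≠ 0) {z : ℂ} (hz : ‖z‖ ≠ 1) : aeval z (X ^ m - 1 : R[X]) ≠ 0 := by
  rw [map_sub, map_pow, aeval_X, map_one, sub_ne_zero]
  exact fun hzm => hz (Complex.norm_eq_one_of_pow_eq_one hzm hm)

end Polynomial

theorem torsion_of_charpoly_frobenius_annihilates_general
    {M : Type*} [AddCommGroup M] (m : ℕ) (hm : 1 ≤ m)
    (σ : AddMonoid.End M) (hσ : σ ^ m = 1)
    (q : ℝ) (hq : 1 < q)
    (Φ : Polynomial ℤ)
    (hroots : ∀ z : ℂ, aeval z Φ = 0 → ‖z‖ = Real.sqrt q)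
    (P : M) (hP : aeval σ Φ P = 0) :
    ∃ N : ℕ, 1 ≤ N ∧ N • P = 0 := by
  have hσP : aeval σ (X ^ m - 1 : ℤ[X]) P = 0 := by simp [hσ]
  have hdeg : (X ^ m - 1 : ℤ[X]).natDegree ≠ 0 := by
    rw [← C_1, natDegree_X_pow_sub_C]; omega
  have hres : resultant Φ (X ^ m - 1) ≠ 0 := by
    refine resultant_ne_zero_of_forall_aeval_ne_zero (K := ℂ) (RingHom.injective_int _)
      fun z => or_iff_not_imp_left.mpr fun hz => ?_
    have hnorm : 1 < ‖z‖ := by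
      rw [hroots z (not_not.mp hz), Real.lt_sqrt zero_le_one, one_pow]
      exact hq
    exact aeval_X_pow_sub_one_ne_zero_of_norm_ne_one (by omega) hnorm.ne'
  exact isOfFinAddOrder_iff_nsmul_eq_zero.mp <| isOfFinAddOrder_iff_zsmul_eq_zero.mpr
    ⟨_, hres, resultant_smul_eq_zero_of_aeval_smul_eq_zero (Or.inr hdeg) σ hP hσP⟩

/-- abstract form of Theorem 4.1(c) of Baker–Silverman: Let `M` be an
abelian group, `m ≥ 1`, and `σ : M → M` an additive endomorphism with `σ^m = id`.  Let
`Φ ∈ ℤ[X]` be a monic polynomial of degree `2g` all of whose complex roots have absolute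
value `q^{1/2}` for some real `q > 1`.  If `P ∈ M` satisfies `Φ(σ)(P) = 0`, then `P` is a
torsion element: `N • P = 0` for some integer `N ≥ 1`. -/
theorem torsion_of_charpoly_frobenius_annihilates
    {M : Type*} [AddCommGroup M] (m : ℕ) (hm : 1 ≤ m)
    (σ : AddMonoid.End M) (hσ : σ ^ m = 1)
    (g : ℕ) (q : ℝ) (hq : 1 < q)
    (Φ : Polynomial ℤ) (hmonic : Φ.Monic) (hdeg : Φ.natDegree = 2 * g)
    (hroots : ∀ z : ℂ, aeval z Φ = 0 → ‖z‖ = Real.sqrt q)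
    (P : M) (hP : aeval σ Φ P = 0) :
    ∃ N : ℕ, 1 ≤ N ∧ N • P = 0 :=
  torsion_of_charpoly_frobenius_annihilates_general m hm σ hσ q hq Φ hroots P hP
end

section
/- Let p be a prime number and m a positive integer divisible by p. Let ζ be a primitive m-th root of unity and let τ be the automorphism of ℚ(ζ) determined by τ(ζ) = ζ^t, where t is an integer coprime to m with t ≡ 1 (mod m/p). Then for every α ∈ ℤ[ζ], one has τ(α)^p ≡ α^p (mod p·ℤ[ζ]). -/
/-!
Write `α = f(ζ)` with `f ∈ ℤ[X]`. Modulo `p` one has `f ^ p ≡ f(X ^ p)` in `ℤ[X]`, so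
`α ^ p ≡ f(ζ ^ p)` and `τ(α) ^ p = f(ζ ^ t) ^ p ≡ f(ζ ^ (t * p))` modulo `p ℤ[ζ]`.
Since `m = (m / p) * p` divides `(t - 1) * p`, we get `ζ ^ (t * p) = ζ ^ p`.
-/

open Polynomial

theorem IsPrimitiveRoot.zpow_eq_zpow_of_dvd_sub {K : Type*} [Field K] {ζ : K} {m : ℕ}
    (hζ : IsPrimitiveRoot ζ m) (hm : 0 < m) {a b : ℤ} (h : (m : ℤ) ∣ a - b) :
    ζ ^ a = ζ ^ b := by
  rw [← div_eq_one_iff_eq (zpow_ne_zero b (hζ.ne_zero hm.ne')), ← zpow_sub₀ (hζ.ne_zero hm.ne'),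
    hζ.zpow_eq_one_iff_dvd]
  exact h

theorem IsPrimitiveRoot.zpow_mem_adjoin {K : Type*} [Field K] {ζ : K} {m : ℕ}
    (hζ : IsPrimitiveRoot ζ m) (hm : 0 < m) (t : ℤ) : ζ ^ t ∈ Algebra.adjoin ℤ {ζ} := by
  have hpow : ζ ^ t = ζ ^ (t % m).toNat := by
    rw [← zpow_natCast, Int.toNat_of_nonneg (Int.emod_nonneg t (by omega))]
    exact hζ.zpow_eq_zpow_of_dvd_sub hm (Int.mod_modEq t m).dvd
  rw [hpow]
  exact pow_mem (Algebra.self_mem_adjoin_singleton ℤ ζ) _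

theorem IsPrimitiveRoot.zpow_pow_eq_pow {K : Type*} [Field K] {ζ : K} {m p : ℕ}
    (hζ : IsPrimitiveRoot ζ m) (hm : 0 < m) (hpm : p ∣ m) {t : ℤ}
    (ht1 : ((m / p : ℕ) : ℤ) ∣ t - 1) : (ζ ^ t) ^ p = ζ ^ p := by
  have hdvd : (m : ℤ) ∣ t * p - p := by
    rw [← Nat.div_mul_cancel hpm, Nat.cast_mul, ← sub_one_mul]
    exact mul_dvd_mul_right ht1 _
  rw [← zpow_natCast, ← zpow_mul, ← zpow_natCast]
  exact hζ.zpow_eq_zpow_of_dvd_sub hm hdvd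

theorem Polynomial.exists_pow_sub_expand_eq_C_mul {p : ℕ} [Fact p.Prime] (f : ℤ[X]) :
    ∃ g : ℤ[X], f ^ p - expand ℤ p f = C (p : ℤ) * g := by
  have hmap : (f ^ p - expand ℤ p f).map (Int.castRingHom (ZMod p)) = 0 := by
    rw [Polynomial.map_sub, Polynomial.map_pow, map_expand, ZMod.expand_card, sub_self]
  rw [← dvd_def, C_dvd_iff_dvd_coeff]
  intro i
  rw [← ZMod.intCast_zmod_eq_zero_iff_dvd, ← eq_intCast (Int.castRingHom _), ← coeff_map, hmap,
    coeff_zero]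

theorem Polynomial.exists_aeval_pow_sub_aeval_pow_eq {R : Type*} [CommRing R] {p : ℕ}
    [Fact p.Prime] (f : ℤ[X]) :
    ∃ g : ℤ[X], ∀ x : R, aeval x f ^ p - aeval (x ^ p) f = p * aeval x g := by
  obtain ⟨g, hg⟩ := f.exists_pow_sub_expand_eq_C_mul (p := p)
  refine ⟨g, fun x => ?_⟩
  simpa [expand_aeval] using congrArg (aeval x) hg

theorem cyclotomic_pow_p_congruence_general
    {F : Type*} [Field F]
    (p m : ℕ) (hp : p.Prime) (hm : 0 < m) (hpm : p ∣ m)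
    (ζ : F) (hζ : IsPrimitiveRoot ζ m)
    (t : ℤ) (ht1 : ((m / p : ℕ) : ℤ) ∣ t - 1)
    (τ : F ≃+* F) (hτ : τ ζ = ζ ^ t)
    (α : F) (hα : α ∈ Algebra.adjoin ℤ ({ζ} : Set F)) :
    ∃ β ∈ Algebra.adjoin ℤ ({ζ} : Set F), τ α ^ p - α ^ p = (p : F) * β := by
  have : Fact p.Prime := ⟨hp⟩
  obtain ⟨f, rfl⟩ : ∃ f : ℤ[X], aeval ζ f = α := by
    rwa [Algebra.adjoin_singleton_eq_range_aeval] at hα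
  have hτf : τ (aeval ζ f) = aeval (ζ ^ t) f := by
    rw [← hτ]
    exact (aeval_algHom_apply (τ : F →+* F).toIntAlgHom ζ f).symm
  obtain ⟨g, hg⟩ := f.exists_aeval_pow_sub_aeval_pow_eq (R := F) (p := p)
  refine ⟨aeval (ζ ^ t) g - aeval ζ g, sub_mem ?_ (aeval_mem_adjoin_singleton ℤ ζ), ?_⟩
  · exact Algebra.adjoin_singleton_le (hζ.zpow_mem_adjoin hm t) (aeval_mem_adjoin_singleton ℤ _)
  · have hfrob := hg (ζ ^ t)
    rw [hζ.zpow_pow_eq_pow hm hpm ht1] at hfrob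
    rw [hτf, mul_sub, ← hfrob, ← hg ζ]
    ring

/-- Amoroso–Dvornicich congruence, cyclotomic case: Let `p` be a prime and
`m` a positive integer divisible by `p`.  Let `ζ` be a primitive `m`-th root of unity and `τ`
the automorphism determined by `τ(ζ) = ζ^t`, where `t` is coprime to `m` and
`t ≡ 1 (mod m/p)`.  Then for every `α ∈ ℤ[ζ]` we have `τ(α)^p ≡ α^p (mod p·ℤ[ζ])`. -/
theorem cyclotomic_pow_p_congruence
    {F : Type*} [Field F] [CharZero F]
    (p m : ℕ) (hp : p.Prime) (hm : 0 < m) (hpm : p ∣ m)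
    (ζ : F) (hζ : IsPrimitiveRoot ζ m)
    (t : ℤ) (ht : IsCoprime t (m : ℤ)) (ht1 : ((m / p : ℕ) : ℤ) ∣ t - 1)
    (τ : F ≃+* F) (hτ : τ ζ = ζ ^ t)
    (α : F) (hα : α ∈ Algebra.adjoin ℤ ({ζ} : Set F)) :
    ∃ β ∈ Algebra.adjoin ℤ ({ζ} : Set F), τ α ^ p - α ^ p = (p : F) * β :=
  cyclotomic_pow_p_congruence_general p m hp hm hpm ζ hζ t ht1 τ hτ α hα
end

section
/- Let L be a number field with ring of integers 𝒪_L, let c : L → L be a field automorphism of L, let p be a rational prime that is unramified in L (i.e., every prime ideal of 𝒪_L containing p has ramification index 1 over p), and let π ∈ 𝒪_L satisfy π·c(π) = p. Then for every prime ideal 𝔮 of 𝒪_L with p ∈ 𝔮, exactly one of the two elements π and c(π) lies in 𝔮. -/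
open NumberField

/-!
If `π c(π) = p` and `𝔮 ∣ p`, then `𝔮` contains `π` or `c(π)` because it is prime. If it contained
both, `p` would lie in `𝔮²`, so `𝔮` would be ramified over `p`.
-/

namespace Ideal

variable {R S : Type*} [CommRing R] [CommRing S] [Algebra R S] {p : Ideal R} {P : Ideal S}

/-- `ramificationIdx'` is `0` when the exponents `n` with `p S ≤ P ^ n` are unbounded. -/
theorem le_ramificationIdx'_of_map_le_pow (he : ramificationIdx' p P ≠ 0) {n : ℕ}
    (hn : map (algebraMap R S) p ≤ P ^ n) : n ≤ ramificationIdx' p P := by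
  have hbdd : BddAbove {n | map (algebraMap R S) p ≤ P ^ n} := by
    by_contra h
    exact he (Nat.sSup_of_not_bddAbove h)
  exact le_csSup hbdd hn

theorem xor_mem_of_mul_eq_of_ramificationIdx'_eq_one [P.IsPrime] {r : R}
    (he : ramificationIdx' (span {r}) P = 1) {a b : S} (hab : a * b = algebraMap R S r)
    (hr : algebraMap R S r ∈ P) : Xor (a ∈ P) (b ∈ P) := by
  refine (xor_iff_or_and_not_and _ _).mpr ⟨IsPrime.mem_or_mem ‹_› (hab ▸ hr), ?_⟩
  rintro ⟨ha, hb⟩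
  have hsq : map (algebraMap R S) (span {r}) ≤ P ^ 2 := by
    rw [map_span, Set.image_singleton, span_singleton_le_iff_mem, ← hab, sq]
    exact mul_mem_mul ha hb
  have h2le := le_ramificationIdx'_of_map_le_pow (he ▸ one_ne_zero) hsq
  omega

end Ideal

theorem xor_mem_prime_of_mul_conj_eq_p_general
    {L : Type*} [Field L] (c : L ≃+* L)
    (p : ℕ)
    (hunram : ∀ 𝔮 : Ideal (𝓞 L), 𝔮.IsPrime → (p : 𝓞 L) ∈ 𝔮 →
      Ideal.ramificationIdx' (Ideal.span {(p : ℤ)}) 𝔮 = 1)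
    (π : 𝓞 L) (hπ : π * RingOfIntegers.mapRingEquiv c π = (p : 𝓞 L)) :
    ∀ 𝔮 : Ideal (𝓞 L), 𝔮.IsPrime → (p : 𝓞 L) ∈ 𝔮 →
      Xor' (π ∈ 𝔮) (RingOfIntegers.mapRingEquiv c π ∈ 𝔮) := by
  intro 𝔮 h𝔮 hp𝔮
  exact Ideal.xor_mem_of_mul_eq_of_ramificationIdx'_eq_one (hunram 𝔮 h𝔮 hp𝔮)
    (by simpa using hπ) (by simpa using hp𝔮)

/-- key step in Theorem 5.2 of Baker–Silverman: Let `L` be a number field,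
`c : L → L` a field automorphism, and `p` a rational prime unramified in `L`.  If
`π ∈ 𝒪_L` satisfies `π · c(π) = p`, then for every prime ideal `𝔮` of `𝒪_L` containing `p`,
exactly one of `π` and `c(π)` lies in `𝔮`. -/
theorem xor_mem_prime_of_mul_conj_eq_p
    {L : Type*} [Field L] [NumberField L] (c : L ≃+* L)
    (p : ℕ) (hp : p.Prime)
    (hunram : ∀ 𝔮 : Ideal (𝓞 L), 𝔮.IsPrime → (p : 𝓞 L) ∈ 𝔮 →
      Ideal.ramificationIdx' (Ideal.span {(p : ℤ)}) 𝔮 = 1)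
    (π : 𝓞 L) (hπ : π * RingOfIntegers.mapRingEquiv c π = (p : 𝓞 L)) :
    ∀ 𝔮 : Ideal (𝓞 L), 𝔮.IsPrime → (p : 𝓞 L) ∈ 𝔮 →
      Xor' (π ∈ 𝔮) (RingOfIntegers.mapRingEquiv c π ∈ 𝔮) :=
  xor_mem_prime_of_mul_conj_eq_p_general c p hunram π hπ
end
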